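/- Let m ≥ 4, n = 2^m − 1, and let α be a primitive element of the finite field F_{2^m} (a generator of the multiplicative group F_{2^m}^*). Define the binary Hamming code BCH(1,m) = { c ∈ F_2^n : Σ_{i=0}^{n−1} c_i α^i = 0 } and the binary primitive double-error-correcting BCH code BCH(2,m) = { c ∈ F_2^n : Σ_{i=0}^{n−1} c_i α^i = 0 and Σ_{i=0}^{n−1} c_i α^{3i} = 0 }, where the coordinates c_i ∈ F_2 are viewed as elements of F_{2^m}. Then for every integer r with 1 ≤ r ≤ m, the r-th generalized covering radius satisfies ρ_r(BCH(2,m)) ≥ d_r(BCH(1,m)). -/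

import Mathlib

/-- The support of a vector `v ∈ F_2^n` : the set of coordinate positions where `v` is nonzero. -/
def vecSupp {n : ℕ} (v : Fin n → ZMod 2) : Finset (Fin n) :=
  Finset.univ.filter fun i => v i ≠ 0

/-- The support of a subspace `D ⊆ F_2^n` : the union of the supports of its elements. -/
def codeSupp {n : ℕ} (D : Submodule (ZMod 2) (Fin n → ZMod 2)) : Set (Fin n) :=
  {i | ∃ v ∈ D, v i ≠ 0}

/-- The `r`-th generalized Hamming weight of a binary linear code `C ⊆ F_2^n` : the minimum
support size of an `r`-dimensional subcode of `C`. -/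
noncomputable def ghw {n : ℕ} (C : Submodule (ZMod 2) (Fin n → ZMod 2)) (r : ℕ) : ℕ :=
  sInf {s | ∃ D : Submodule (ZMod 2) (Fin n → ZMod 2),
    D ≤ C ∧ Module.finrank (ZMod 2) ↥D = r ∧ (codeSupp D).ncard = s}

/-- The `F_2`-linear evaluation map `c ↦ Σ_{i=0}^{n−1} c_i • β^i ∈ F_{2^m}`, where the binary
coordinates `c_i` act on `F_{2^m}` via the `F_2`-module structure. -/
noncomputable def evalMap (m n : ℕ) (β : GaloisField 2 m) :
    (Fin n → ZMod 2) →ₗ[ZMod 2] GaloisField 2 m where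
  toFun c := ∑ i : Fin n, c i • β ^ (i : ℕ)
  map_add' c d := by simp [add_smul, Finset.sum_add_distrib]
  map_smul' a c := by simp [Finset.smul_sum, mul_smul]

/-- The binary Hamming code `BCH(1,m) = {c ∈ F_2^n : Σ c_i α^i = 0}`, `n = 2^m − 1`. -/
noncomputable def BCH1 (m : ℕ) (α : GaloisField 2 m) :
    Submodule (ZMod 2) (Fin (2 ^ m - 1) → ZMod 2) :=
  LinearMap.ker (evalMap m (2 ^ m - 1) α)

/-- The binary primitive double-error-correcting BCH code
`BCH(2,m) = {c ∈ F_2^n : Σ c_i α^i = 0 and Σ c_i α^{3i} = 0}`, `n = 2^m − 1`. -/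
noncomputable def BCH2 (m : ℕ) (α : GaloisField 2 m) :
    Submodule (ZMod 2) (Fin (2 ^ m - 1) → ZMod 2) :=
  LinearMap.ker (evalMap m (2 ^ m - 1) α) ⊓ LinearMap.ker (evalMap m (2 ^ m - 1) (α ^ 3))


/-!
The map `c ↦ Σ cᵢ α³ⁱ` sends the Hamming code `BCH(1,m)` onto `F = 𝔽_{2^m}`. Indeed, the image
`W` contains `a³ + b³ + (a + b)³ = a²b + ab²` (the image of a word of weight at most three in
`BCH(1,m)`), hence every `b + b²`; these form the trace-zero hyperplane, so `W ≠ F` would force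
`Tr (a²b + ab²) = Tr (a² (b + b⁴))` to vanish identically, which is false as soon as `b⁴ ≠ b`.

So pick words `vᵢ ∈ BCH(1,m)` whose images `tᵢ` are linearly independent. For codewords
`cᵢ ∈ BCH(2,m)` the differences `vᵢ - cᵢ` still lie in `BCH(1,m)` and still map to `tᵢ`, so they
span an `r`-dimensional subcode of `BCH(1,m)` whose support is the union of their supports.
-/

open Module

theorem Submodule.eq_top_of_lt_of_finrank_le_succ {K V : Type*} [DivisionRing K]
    [AddCommGroup V] [Module K V] [FiniteDimensional K V] {A W : Submodule K V}
    (hA : finrank K V ≤ finrank K A + 1) (hAW : A < W) : W = ⊤ :=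
  Submodule.eq_top_of_finrank_eq <|
    le_antisymm (Submodule.finrank_le W) (hA.trans (Submodule.finrank_lt_finrank_of_lt hAW))

namespace FiniteField

theorem exists_pow_eq_of_orderOf_eq {K : Type*} [Field K] [Finite K] {α : K}
    (hα : orderOf α = Nat.card K - 1) {x : K} (hx : x ≠ 0) :
    ∃ i < Nat.card K - 1, α ^ i = x := by
  have : Fintype K := Fintype.ofFinite K
  rw [Nat.card_eq_fintype_card] at hα ⊢
  have : NeZero (Fintype.card K - 1) := ⟨by have := Fintype.one_lt_card (α := K); omega⟩
  exact (hα ▸ IsPrimitiveRoot.orderOf α).eq_pow_of_pow_eq_one (pow_card_sub_one_eq_one x hx)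

section sqAddSelf

variable (R : Type*) [CommRing R] [Algebra (ZMod 2) R]

noncomputable def sqAddSelf : R →ₗ[ZMod 2] R :=
  (frobeniusAlgHom (ZMod 2) R).toLinearMap + LinearMap.id

variable {R} in
theorem sqAddSelf_apply (x : R) : sqAddSelf R x = x ^ 2 + x := by
  simp [sqAddSelf, ZMod.card]

end sqAddSelf

variable {F : Type*} [Field F] [Finite F] [Algebra (ZMod 2) F]

theorem finrank_le_finrank_range_sqAddSelf_add_one :
    finrank (ZMod 2) F ≤ finrank (ZMod 2) (LinearMap.range (sqAddSelf F)) + 1 := by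
  have hker : LinearMap.ker (sqAddSelf F) ≤ Submodule.span (ZMod 2) {1} := by
    intro x hx
    rw [LinearMap.mem_ker, sqAddSelf_apply, show x ^ 2 + x = x * (x + 1) by ring] at hx
    rcases mul_eq_zero.1 hx with h | h
    · simp [h]
    · rw [eq_neg_of_add_eq_zero_left h]
      exact neg_mem (Submodule.mem_span_singleton_self 1)
  have := Submodule.finrank_mono hker
  rw [finrank_span_singleton one_ne_zero] at this
  have := LinearMap.finrank_range_add_finrank_ker (sqAddSelf F)
  omega

theorem trace_zmod_two_sq (x : F) :
    Algebra.trace (ZMod 2) F (x ^ 2) = Algebra.trace (ZMod 2) F x := by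
  have := Algebra.trace_eq_of_algEquiv (frobeniusAlgEquivOfAlgebraic (ZMod 2) F) x
  rwa [coe_frobeniusAlgEquivOfAlgebraic, ZMod.card] at this

theorem trace_zmod_two_sq_add_self (x : F) : Algebra.trace (ZMod 2) F (x ^ 2 + x) = 0 := by
  rw [map_add, trace_zmod_two_sq, CharTwo.add_self_eq_zero]

theorem exists_trace_zmod_two_sq_mul_add_mul_sq_ne_zero {b : F} (hb : b + b ^ 4 ≠ 0) :
    ∃ a : F, Algebra.trace (ZMod 2) F (a ^ 2 * b + a * b ^ 2) ≠ 0 := by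
  obtain ⟨y, hy⟩ : ∃ y : F, Algebra.trace (ZMod 2) F y ≠ 0 := by
    by_contra! h
    exact Algebra.trace_ne_zero (ZMod 2) F (LinearMap.ext h)
  obtain ⟨a, ha⟩ : ∃ a : F, a ^ 2 = y / (b + b ^ 4) := by
    simpa only [coe_frobeniusAlgEquivOfAlgebraic, ZMod.card] using
      (frobeniusAlgEquivOfAlgebraic (ZMod 2) F).surjective (y / (b + b ^ 4))
  refine ⟨a, ?_⟩
  rwa [map_add, ← trace_zmod_two_sq (a * b ^ 2), ← map_add,
    show a ^ 2 * b + (a * b ^ 2) ^ 2 = a ^ 2 * (b + b ^ 4) by ring, ha,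
    div_mul_cancel₀ y hb]

theorem submodule_eq_top_of_forall_sq_mul_add_mul_sq_mem {W : Submodule (ZMod 2) F} {b : F}
    (hb : b + b ^ 4 ≠ 0) (hW : ∀ x y : F, x ^ 2 * y + x * y ^ 2 ∈ W) : W = ⊤ := by
  obtain ⟨a, ha⟩ := exists_trace_zmod_two_sq_mul_add_mul_sq_ne_zero hb
  refine Submodule.eq_top_of_lt_of_finrank_le_succ finrank_le_finrank_range_sqAddSelf_add_one
    (SetLike.lt_iff_le_and_exists.2 ⟨?_, _, hW a b, ?_⟩)
  · rintro _ ⟨x, rfl⟩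
    simpa [sqAddSelf_apply, add_comm] using hW 1 x
  · rintro ⟨x, hx⟩
    rw [← hx, sqAddSelf_apply, trace_zmod_two_sq_add_self] at ha
    exact ha rfl

end FiniteField

theorem evalMap_single (m n : ℕ) (β : GaloisField 2 m) (i : Fin n) :
    evalMap m n β (Pi.single i 1) = β ^ (i : ℕ) := by
  simp [evalMap, Pi.single_apply]

theorem exists_evalMap_eq_and_evalMap_pow_three_eq {m : ℕ} (hm : m ≠ 0) {α : GaloisField 2 m}
    (hα : orderOf α = 2 ^ m - 1) (x : GaloisField 2 m) :
    ∃ e, evalMap m (2 ^ m - 1) α e = x ∧ evalMap m (2 ^ m - 1) (α ^ 3) e = x ^ 3 := by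
  rcases eq_or_ne x 0 with rfl | hx
  · exact ⟨0, by simp⟩
  rw [← GaloisField.card 2 m hm] at hα
  obtain ⟨i, hi, rfl⟩ := FiniteField.exists_pow_eq_of_orderOf_eq hα hx
  rw [GaloisField.card 2 m hm] at hi
  refine ⟨Pi.single ⟨i, hi⟩ 1, ?_, ?_⟩ <;> simp only [evalMap_single, ← pow_mul, mul_comm]

theorem sq_mul_add_mul_sq_mem_map_BCH1 {m : ℕ} (hm : m ≠ 0) {α : GaloisField 2 m}
    (hα : orderOf α = 2 ^ m - 1) (a b : GaloisField 2 m) :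
    a ^ 2 * b + a * b ^ 2 ∈ (BCH1 m α).map (evalMap m (2 ^ m - 1) (α ^ 3)) := by
  obtain ⟨ea, ha, ha3⟩ := exists_evalMap_eq_and_evalMap_pow_three_eq hm hα a
  obtain ⟨eb, hb, hb3⟩ := exists_evalMap_eq_and_evalMap_pow_three_eq hm hα b
  obtain ⟨eab, hab, hab3⟩ := exists_evalMap_eq_and_evalMap_pow_three_eq hm hα (a + b)
  have h2 : (2 : GaloisField 2 m) = 0 := CharTwo.two_eq_zero
  refine ⟨ea + eb + eab, ?_, ?_⟩
  · rw [SetLike.mem_coe, BCH1, LinearMap.mem_ker, map_add, map_add, ha, hb, hab]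
    linear_combination (a + b) * h2
  · rw [map_add, map_add, ha3, hb3, hab3]
    linear_combination (a ^ 3 + b ^ 3 + a ^ 2 * b + a * b ^ 2) * h2

theorem map_evalMap_pow_three_BCH1_eq_top {m : ℕ} (hm : 3 ≤ m) {α : GaloisField 2 m}
    (hα : orderOf α = 2 ^ m - 1) : (BCH1 m α).map (evalMap m (2 ^ m - 1) (α ^ 3)) = ⊤ := by
  have h8 : 2 ^ 3 ≤ 2 ^ m := Nat.pow_le_pow_right two_pos hm
  have hα0 : α ≠ 0 := by
    rintro rfl
    rw [orderOf_zero] at hα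
    omega
  have hα3 : α ^ 3 ≠ 1 := pow_ne_one_of_lt_orderOf (by norm_num) (by omega)
  have hb : α + α ^ 4 ≠ 0 := by
    rw [show α + α ^ 4 = α * (α ^ 3 + 1) by ring]
    refine mul_ne_zero hα0 fun h => hα3 ?_
    rwa [CharTwo.add_eq_zero] at h
  exact FiniteField.submodule_eq_top_of_forall_sq_mul_add_mul_sq_mem hb
    (sq_mul_add_mul_sq_mem_map_BCH1 (by omega) hα)

theorem codeSupp_span_range_subset {ι : Type*} [Fintype ι] {n : ℕ} (u : ι → Fin n → ZMod 2) :
    codeSupp (Submodule.span (ZMod 2) (Set.range u)) ⊆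
      ↑(Finset.univ.biUnion fun i => vecSupp (u i)) := by
  rintro j ⟨w, hw, hwj⟩
  by_contra hj
  refine hwj (Submodule.span_le.2 ?_ hw : w ∈ LinearMap.ker (LinearMap.proj j))
  rintro _ ⟨i, rfl⟩
  by_contra hij
  exact hj (Finset.mem_biUnion.2
    ⟨i, Finset.mem_univ i, Finset.mem_filter.2 ⟨Finset.mem_univ j, hij⟩⟩)

theorem ghw_le_card_biUnion_vecSupp {ι : Type*} [Fintype ι] {n : ℕ}
    {C : Submodule (ZMod 2) (Fin n → ZMod 2)} {u : ι → Fin n → ZMod 2} (hu : ∀ i, u i ∈ C)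
    (hli : LinearIndependent (ZMod 2) u) :
    ghw C (Fintype.card ι) ≤ (Finset.univ.biUnion fun i => vecSupp (u i)).card := by
  refine (Nat.sInf_le ⟨Submodule.span (ZMod 2) (Set.range u),
    Submodule.span_le.2 (Set.range_subset_iff.2 hu), finrank_span_eq_card hli, rfl⟩ :
      ghw C _ ≤ _).trans ?_
  rw [← Set.ncard_coe_finset]
  exact Set.ncard_le_ncard (codeSupp_span_range_subset u) (Finset.finite_toSet _)

theorem gcr_BCH2_ge_ghw_BCH1_general (m : ℕ) (hm : 4 ≤ m) (α : GaloisField 2 m)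
    (hα : orderOf α = 2 ^ m - 1) (r : ℕ) (hrm : r ≤ m) :
    ∃ v : Fin r → (Fin (2 ^ m - 1) → ZMod 2),
      ∀ c : Fin r → (Fin (2 ^ m - 1) → ZMod 2), (∀ i, c i ∈ BCH2 m α) →
        ghw (BCH1 m α) r ≤ (Finset.univ.biUnion fun i => vecSupp (v i - c i)).card := by
  have hr : r ≤ finrank (ZMod 2) (GaloisField 2 m) := by
    rwa [GaloisField.finrank 2 (by omega)]
  let t := Module.finBasis (ZMod 2) (GaloisField 2 m) ∘ Fin.castLE hr
  have ht : LinearIndependent (ZMod 2) t :=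
    (Module.finBasis _ _).linearIndependent.comp _ (Fin.castLE_injective hr)
  have hsurj := map_evalMap_pow_three_BCH1_eq_top (by omega) hα
  choose v hv hvt using fun i => Submodule.mem_map.1 (hsurj ▸ Submodule.mem_top (x := t i))
  refine ⟨v, fun c hc => ?_⟩
  have hu : LinearIndependent (ZMod 2) (fun i => v i - c i) := by
    refine LinearIndependent.of_comp (evalMap m _ (α ^ 3)) ?_
    convert ht using 1
    ext i
    simp [hvt, LinearMap.mem_ker.1 (hc i).2]
  simpa using ghw_le_card_biUnion_vecSupp (fun i => sub_mem (hv i) (hc i).1) hu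

/-- For `m ≥ 4`, a primitive element `α` of `F_{2^m}` (i.e. of multiplicative order `2^m − 1`),
and `1 ≤ r ≤ m`, the `r`-th generalized covering radius of `BCH(2,m)` is at least the `r`-th
generalized Hamming weight of `BCH(1,m)`: there exist `v_1, …, v_r ∈ F_2^n` such that for all
codewords `c_1, …, c_r ∈ BCH(2,m)`, the union of the supports of `v_i − c_i` has cardinality
at least `d_r(BCH(1,m))`. -/
theorem gcr_BCH2_ge_ghw_BCH1 (m : ℕ) (hm : 4 ≤ m) (α : GaloisField 2 m)
    (hα : orderOf α = 2 ^ m - 1) (r : ℕ) (hr : 1 ≤ r) (hrm : r ≤ m) :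
    ∃ v : Fin r → (Fin (2 ^ m - 1) → ZMod 2),
      ∀ c : Fin r → (Fin (2 ^ m - 1) → ZMod 2), (∀ i, c i ∈ BCH2 m α) →
        ghw (BCH1 m α) r ≤ (Finset.univ.biUnion fun i => vecSupp (v i - c i)).card :=
  gcr_BCH2_ge_ghw_BCH1_general m hm α hα r hrm
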